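/- Let x, y, z₂ be random variables with finite ranges on a probability space, with joint distribution p(x,y). Assume z₂ is a representation of x, i.e. I(z₂; y | x) = 0. Then z₂ is sufficient for y (i.e. I(x; y | z₂) = 0) if and only if I(x; y) = I(y; z₂). -/
import Mathlib


open MeasureTheory ProbabilityTheory

/-- Shannon entropy of a finite-valued random variable `X` under measure `μ`. -/
noncomputable def entropy {Ω : Type*} [MeasurableSpace Ω] {α : Type*} [Fintype α]
    [MeasurableSpace α] (μ : Measure Ω) (X : Ω → α) : ℝ :=
  - ∑ a : α, (μ (X ⁻¹' {a})).toReal * Real.log (μ (X ⁻¹' {a})).toReal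

/-- Conditional entropy `H(X | Y) = H(X, Y) - H(Y)`. -/
noncomputable def condEntropy {Ω : Type*} [MeasurableSpace Ω] {α β : Type*}
    [Fintype α] [MeasurableSpace α] [Fintype β] [MeasurableSpace β]
    (μ : Measure Ω) (X : Ω → α) (Y : Ω → β) : ℝ :=
  entropy μ (fun ω => (X ω, Y ω)) - entropy μ Y

/-- Mutual information `I(X; Y) = H(X) - H(X | Y)`. -/
noncomputable def mutualInfo {Ω : Type*} [MeasurableSpace Ω] {α β : Type*}
    [Fintype α] [MeasurableSpace α] [Fintype β] [MeasurableSpace β]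
    (μ : Measure Ω) (X : Ω → α) (Y : Ω → β) : ℝ :=
  entropy μ X - condEntropy μ X Y

/-- Conditional mutual information `I(X; Y | W) = H(X | W) - H(X | (Y, W))`. -/
noncomputable def condMutualInfo {Ω : Type*} [MeasurableSpace Ω] {α β γ : Type*}
    [Fintype α] [MeasurableSpace α] [Fintype β] [MeasurableSpace β]
    [Fintype γ] [MeasurableSpace γ]
    (μ : Measure Ω) (X : Ω → α) (Y : Ω → β) (W : Ω → γ) : ℝ :=
  condEntropy μ X W - condEntropy μ X (fun ω => (Y ω, W ω))

lemma entropy_comp_equiv {Ω : Type*} [MeasurableSpace Ω] {α β : Type*} [Fintype α]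
    [MeasurableSpace α] [Fintype β] [MeasurableSpace β]
    (μ : Measure Ω) (X : Ω → α) (e : α ≃ β) :
    entropy μ (fun ω => e (X ω)) = entropy μ X := by
  unfold entropy
  congr 1
  rw [← e.sum_comp]
  refine Finset.sum_congr rfl fun a _ => ?_
  have : (fun ω => e (X ω)) ⁻¹' {e a} = X ⁻¹' {a} := by
    ext ω; simp [e.injective.eq_iff]
  rw [this]

theorem sufficiency_iff
    {Ω : Type*} [MeasurableSpace Ω] (μ : Measure Ω) [IsProbabilityMeasure μ]
    {A B D : Type*}
    [Fintype A] [MeasurableSpace A] [MeasurableSingletonClass A]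
    [Fintype B] [MeasurableSpace B] [MeasurableSingletonClass B]
    [Fintype D] [MeasurableSpace D] [MeasurableSingletonClass D]
    (x : Ω → A) (y : Ω → B) (z₂ : Ω → D)
    (hx : Measurable x) (hy : Measurable y) (hz₂ : Measurable z₂)
    (hz₂rep : condMutualInfo μ z₂ y x = 0) :
    condMutualInfo μ x y z₂ = 0 ↔ mutualInfo μ x y = mutualInfo μ y z₂ := by
  have h3 : entropy μ (fun ω => (z₂ ω, (y ω, x ω))) =
      entropy μ (fun ω => (x ω, (y ω, z₂ ω))) := by
    exact entropy_comp_equiv μ (fun ω => (x ω, (y ω, z₂ ω)))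
      ⟨fun p => (p.2.2, (p.2.1, p.1)), fun p => (p.2.2, (p.2.1, p.1)),
       fun p => rfl, fun p => rfl⟩
  have h1 : entropy μ (fun ω => (x ω, z₂ ω)) = entropy μ (fun ω => (z₂ ω, x ω)) :=
    entropy_comp_equiv μ (fun ω => (z₂ ω, x ω)) (Equiv.prodComm D A)
  have h2 : entropy μ (fun ω => (x ω, y ω)) = entropy μ (fun ω => (y ω, x ω)) :=
    entropy_comp_equiv μ (fun ω => (y ω, x ω)) (Equiv.prodComm B A)
  have h4 : entropy μ (fun ω => (y ω, z₂ ω)) = entropy μ (fun ω => (z₂ ω, y ω)) :=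
    entropy_comp_equiv μ (fun ω => (z₂ ω, y ω)) (Equiv.prodComm D B)
  simp only [condMutualInfo, condEntropy, mutualInfo] at hz₂rep h3 h1 h2 h4 ⊢
  constructor <;> intro h <;> linarith
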